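/- arXiv:2407.17061 — 2 statements merged into one kernel-verified Lean document; each statement's English description precedes it below -/
import Mathlib

section
/- Let a : [0,∞) → ℝ be a C² function that is nonnegative and nonincreasing, and suppose there is a constant C > 0 such that a''(t) ≥ C·a'(t) for all t ≥ 0. Then a'(t) → 0 as t → ∞. -/
open Filter Real

/-- If `a` is C², nonnegative and nonincreasing on `[0,∞)`, and `a'' ≥ C·a'` there for some
`C > 0`, then `a'(t) → 0` as `t → ∞`. -/
theorem stmt_1 (a : ℝ → ℝ) (C : ℝ) (hC : 0 < C)
    (hreg : ContDiff ℝ 2 a)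
    (hnonneg : ∀ t, 0 ≤ t → 0 ≤ a t)
    (hmono : ∀ s t, 0 ≤ s → s ≤ t → a t ≤ a s)
    (hdiff : ∀ t, 0 ≤ t → C * deriv a t ≤ deriv (deriv a) t) :
    Filter.Tendsto (deriv a) Filter.atTop (nhds 0) := by
  have hd : Differentiable ℝ a := hreg.differentiable (by norm_num)
  have hd1 : ContDiff ℝ 1 (deriv a) := (contDiff_succ_iff_deriv.mp (hreg.of_le (by norm_num) : ContDiff ℝ (1+1) a)).2.2
  have hd' : Differentiable ℝ (deriv a) := hd1.differentiable (by norm_num)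
  have hcont' : Continuous (deriv a) := hd'.continuous
  -- deriv a ≤ 0 on [0,∞)
  have hderiv_nonpos : ∀ t, 0 ≤ t → deriv a t ≤ 0 := by
    intro t ht
    have hslope : Tendsto (slope a t) (nhdsWithin t (Set.Ioi t)) (nhds (deriv a t)) :=
      (hasDerivAt_iff_tendsto_slope.mp (hd t).hasDerivAt).mono_left
        (nhdsWithin_mono t (by intro u hu; exact ne_of_gt hu))
    refine le_of_tendsto hslope ?_
    filter_upwards [self_mem_nhdsWithin] with u hu
    have hu' : t < u := hu
    have hle : a u ≤ a t := hmono t u ht hu'.le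
    rw [slope_def_field]
    exact div_nonpos_of_nonpos_of_nonneg (by linarith) (by linarith)
  -- g(t) = a'(t) e^{-Ct} is monotone on [0,∞)
  set g : ℝ → ℝ := fun t => deriv a t * Real.exp (-C * t) with hg
  have hgd : Differentiable ℝ g :=
    hd'.mul ((Real.differentiable_exp.comp (differentiable_id.const_mul _)))
  have hgderiv : ∀ t, deriv g t
      = (deriv (deriv a) t - C * deriv a t) * Real.exp (-C * t) := by
    intro t
    have h1 : HasDerivAt (fun t => Real.exp (-C * t)) (-C * Real.exp (-C * t)) t := by
      simpa [Function.comp_def, mul_comm] using (Real.hasDerivAt_exp (-C * t)).comp t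
        ((hasDerivAt_id t).const_mul (-C))
    have h2 : HasDerivAt g (deriv (deriv a) t * Real.exp (-C * t)
        + deriv a t * (-C * Real.exp (-C * t))) t :=
      ((hd' t).hasDerivAt.mul h1)
    rw [h2.deriv]; ring
  have hgmono : MonotoneOn g (Set.Ici (0 : ℝ)) := by
    apply monotoneOn_of_deriv_nonneg (convex_Ici 0) hgd.continuous.continuousOn
      hgd.differentiableOn
    intro x hx
    rw [interior_Ici] at hx
    rw [hgderiv]
    have := hdiff x hx.le
    have := Real.exp_pos (-C * x)
    nlinarith
  -- key pointwise bound: for 1 ≤ t and u ∈ [t-1, t], a'(u) ≤ a'(t) * e^{-C}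
  have hkey : ∀ t, 1 ≤ t → ∀ u ∈ Set.Icc (t - 1) t,
      deriv a u ≤ deriv a t * Real.exp (-C) := by
    intro t ht u hu
    have hu0 : (0:ℝ) ≤ u := by linarith [hu.1]
    have hgu : g u ≤ g t := hgmono hu0 (by linarith : (0:ℝ) ≤ t) hu.2
    have hek : Real.exp (-C * u) > 0 := Real.exp_pos _
    -- a'(u) ≤ a'(t) e^{-C(t-u)} ≤ a'(t) e^{-C}
    have h1 : deriv a u ≤ deriv a t * Real.exp (-C * t) / Real.exp (-C * u) := by
      rw [le_div_iff₀ hek]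
      simpa [hg] using hgu
    have h2 : Real.exp (-C * t) / Real.exp (-C * u) = Real.exp (C * (u - t)) := by
      rw [← Real.exp_sub]; ring_nf
    rw [mul_div_assoc, h2] at h1
    refine h1.trans ?_
    have hexp : Real.exp (-C) ≤ Real.exp (C * (u - t)) := by
      apply Real.exp_le_exp.mpr
      nlinarith [hu.1, hC]
    have hat : deriv a t ≤ 0 := hderiv_nonpos t (by linarith)
    exact mul_le_mul_of_nonpos_left hexp hat
  -- integrate: a(t) - a(t-1) ≤ a'(t) e^{-C}
  have hint : ∀ t, 1 ≤ t → a t - a (t - 1) ≤ deriv a t * Real.exp (-C) := by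
    intro t ht
    have hle : t - 1 ≤ t := by linarith
    have hftc : ∫ u in (t - 1)..t, deriv a u = a t - a (t - 1) :=
      intervalIntegral.integral_deriv_eq_sub (fun x _ => hd x)
        (hcont'.intervalIntegrable _ _)
    have hmonoInt : ∫ u in (t - 1)..t, deriv a u
        ≤ ∫ _u in (t - 1)..t, deriv a t * Real.exp (-C) := by
      apply intervalIntegral.integral_mono_on hle (hcont'.intervalIntegrable _ _)
        intervalIntegrable_const
      intro u hu
      exact hkey t ht u hu
    rw [hftc] at hmonoInt
    simpa using hmonoInt
  -- a converges at infinity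
  set F : ℝ → ℝ := fun t => a (max t 0) with hF
  have hFanti : Antitone F := by
    intro s t hst
    exact hmono _ _ (le_max_right s 0) (max_le_max hst le_rfl)
  have hFbdd : BddBelow (Set.range F) := by
    refine ⟨0, ?_⟩
    rintro _ ⟨t, rfl⟩
    exact hnonneg _ (le_max_right t 0)
  have hFtend : Tendsto F atTop (nhds (⨅ t, F t)) := tendsto_atTop_ciInf hFanti hFbdd
  have haeq : a =ᶠ[atTop] F := by
    filter_upwards [eventually_ge_atTop (0:ℝ)] with t ht
    simp [hF, max_eq_left ht]
  have hatend : Tendsto a atTop (nhds (⨅ t, F t)) := hFtend.congr' haeq.symm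
  have hatend' : Tendsto (fun t => a (t - 1)) atTop (nhds (⨅ t, F t)) :=
    hatend.comp (tendsto_atTop_add_const_right atTop (-1) tendsto_id)
  have hzero : Tendsto (fun t => (a t - a (t - 1)) * Real.exp C) atTop (nhds 0) := by
    have := (hatend.sub hatend').mul_const (Real.exp C)
    simpa using this
  -- squeeze
  refine tendsto_of_tendsto_of_tendsto_of_le_of_le' hzero tendsto_const_nhds ?_ ?_
  · filter_upwards [eventually_ge_atTop (1:ℝ)] with t ht
    have h := hint t ht
    have hepos : (0:ℝ) < Real.exp (-C) := Real.exp_pos _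
    have hrw : Real.exp (-C) * Real.exp C = 1 := by
      rw [← Real.exp_add]; simp
    calc (a t - a (t - 1)) * Real.exp C ≤ (deriv a t * Real.exp (-C)) * Real.exp C :=
          mul_le_mul_of_nonneg_right h (Real.exp_pos C).le
      _ = deriv a t := by rw [mul_assoc, hrw, mul_one]
  · filter_upwards [eventually_ge_atTop (1:ℝ)] with t ht
    exact hderiv_nonpos t (by linarith)
end

section
/- Let G be a complex Lie group whose Lie algebra 𝔤 is unimodular, with left-invariant (1,0)-frame Z₁,…,Z_n and left-invariant Hermitian metric g. Then the Chern torsion T, whose components satisfy T^k_{ij} Z_k = -[Z_i, Z_j], has vanishing trace: T^r_{i r} = 0 for every i; i.e., g is balanced. -/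
open scoped BigOperators

theorem LinearMap.trace_eq_sum_repr {R M ι : Type*} [CommRing R] [AddCommGroup M] [Module R M]
    [Fintype ι] (b : Module.Basis ι R M) (f : M →ₗ[R] M) :
    LinearMap.trace R M f = ∑ i, b.repr (f (b i)) i := by
  classical
  simp only [LinearMap.trace_eq_matrix_trace R b, Matrix.trace, Matrix.diag,
    LinearMap.toMatrix_apply]

theorem LieAlgebra.sum_repr_lie_basis_eq_neg_trace_ad {R L ι : Type*} [CommRing R] [LieRing L]
    [LieAlgebra R L] [Fintype ι] (b : Module.Basis ι R L) (X : L) :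
    ∑ i, b.repr ⁅b i, X⁆ i = -LinearMap.trace R L (LieAlgebra.ad R L X) := by
  simp only [LinearMap.trace_eq_sum_repr b, LieAlgebra.ad_apply, ← Finset.sum_neg_distrib,
    ← lie_skew X, map_neg, Finsupp.neg_apply, neg_neg]

theorem stmt_19_general {L : Type*} [LieRing L] [LieAlgebra ℂ L] (n : ℕ)
    (B : Module.Basis (Fin n) ℂ L)
    (hunimod : ∀ X : L, LinearMap.trace ℂ L (LieAlgebra.ad ℂ L X) = 0)
    (T : Fin n → Fin n → Fin n → ℂ)
    (hT : ∀ i j, (∑ k, T i j k • B k) = -⁅B i, B j⁆) :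
    ∀ i, (∑ r, T i r r) = 0 := by
  intro i
  have hT_repr : ∀ j, T i j = B.repr ⁅B j, B i⁆ := fun j => by
    rw [← lie_skew, ← hT, B.repr_sum_self]
  simp only [hT_repr, LieAlgebra.sum_repr_lie_basis_eq_neg_trace_ad, hunimod, neg_zero]

/-- On a complex Lie group with unimodular Lie algebra `𝔤` (i.e. `tr (ad X) = 0` for all
`X`), a left-invariant `(1,0)`-frame `Z₁,…,Z_n` (a basis `B` of `𝔤`) and a left-invariant
Hermitian metric `g`, the Chern torsion, whose components satisfy
`T_{ij}^k Z_k = -[Z_i, Z_j]`, has vanishing trace `T_{ir}^r = 0`; i.e. `g` is balanced. -/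
theorem stmt_19 {L : Type*} [LieRing L] [LieAlgebra ℂ L] (n : ℕ)
    (B : Module.Basis (Fin n) ℂ L)
    (g : Fin n → Fin n → ℂ)
    (hherm : ∀ i j, g i j = starRingEnd ℂ (g j i))
    (hunimod : ∀ X : L, LinearMap.trace ℂ L (LieAlgebra.ad ℂ L X) = 0)
    (T : Fin n → Fin n → Fin n → ℂ)
    (hT : ∀ i j, (∑ k, T i j k • B k) = -⁅B i, B j⁆) :
    ∀ i, (∑ r, T i r r) = 0 :=
  stmt_19_general n B hunimod T hT
end
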